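/- arXiv:1612.02643 — 2 statements merged into one kernel-verified Lean document; each statement's English description precedes it below -/
import Mathlib

section
/- For any finite simple graph G, μ^{(∞)}(G) := max_{‖x‖_∞ = 1} ∑_{ij∈E}(x_i - x_j)^2 equals 4 times the size of a maximum cut of G, i.e., μ^{(∞)}(G) = 4 · max_{S ⊆ V} |{ij ∈ E : i ∈ S, j ∉ S}|. -/
open scoped Classical
open Finset

/-- The `p`-norm of a vector. -/
noncomputable def pNorm {V : Type*} [Fintype V] (p : ℝ) (x : V → ℝ) : ℝ :=
  (∑ i, |x i| ^ p) ^ (1 / p)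

/-- The sup-norm of a vector. -/
noncomputable def supNorm {V : Type*} [Fintype V] (x : V → ℝ) : ℝ :=
  ⨆ i, |x i|

/-- The Laplacian quadratic form `∑_{ij ∈ E} (x_i - x_j)^2` of a graph. -/
noncomputable def quadForm {V : Type*} [Fintype V] (G : SimpleGraph V) (x : V → ℝ) : ℝ :=
  (∑ i, ∑ j, if G.Adj i j then (x i - x j) ^ 2 else 0) / 2

/-- The `p`-spectral radius of the Laplacian: `μ⁽ᵖ⁾(G) = max_{‖x‖ₚ = 1} xᵀLx`. -/
noncomputable def mu {V : Type*} [Fintype V] (G : SimpleGraph V) (p : ℝ) : ℝ :=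
  sSup {y | ∃ x : V → ℝ, pNorm p x = 1 ∧ quadForm G x = y}

/-- `μ⁽^∞⁾(G) = max_{‖x‖_∞ = 1} xᵀLx`. -/
noncomputable def muInf {V : Type*} [Fintype V] (G : SimpleGraph V) : ℝ :=
  sSup {y | ∃ x : V → ℝ, supNorm x = 1 ∧ quadForm G x = y}

/-- The size of the cut `(S, Sᶜ)`, i.e. the number of edges with exactly one endpoint in `S`. -/
noncomputable def cutSize {V : Type*} [Fintype V] (G : SimpleGraph V) (S : Finset V) : ℕ :=
  ∑ i ∈ S, ∑ j ∈ Sᶜ, if G.Adj i j then 1 else 0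

section Aux

variable {n : ℕ} (G : SimpleGraph (Fin n))

private lemma sum_indic (S : Finset (Fin n)) (f : Fin n → Fin n → ℝ) :
    (∑ i, ∑ j, if i ∈ S then (if j ∈ Sᶜ then f i j else 0) else 0)
      = ∑ i ∈ S, ∑ j ∈ Sᶜ, f i j := by
  have h1 : ∀ i : Fin n, (∑ j, if i ∈ S then (if j ∈ Sᶜ then f i j else 0) else 0)
      = if i ∈ S then (∑ j ∈ Sᶜ, f i j) else 0 := by
    intro i
    by_cases hi : i ∈ S
    · simp only [hi, if_true]
      rw [Finset.sum_ite_mem, Finset.univ_inter]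
    · simp [hi]
  simp only [h1]
  rw [Finset.sum_ite_mem, Finset.univ_inter]

private lemma quad_pm (S : Finset (Fin n)) :
    quadForm G (fun i => if i ∈ S then (1:ℝ) else -1) = 4 * (cutSize G S : ℝ) := by
  have key : ∀ i j : Fin n,
      (if G.Adj i j then ((if i ∈ S then (1:ℝ) else -1) - (if j ∈ S then (1:ℝ) else -1)) ^ 2 else 0)
      = (if i ∈ S then (if j ∈ Sᶜ then (if G.Adj i j then (4:ℝ) else 0) else 0) else 0)
      + (if j ∈ S then (if i ∈ Sᶜ then (if G.Adj i j then (4:ℝ) else 0) else 0) else 0) := by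
    intro i j
    by_cases hi : i ∈ S <;> by_cases hj : j ∈ S <;>
      simp [hi, hj, Finset.mem_compl] <;> split_ifs <;> ring
  have hcast : (cutSize G S : ℝ) = ∑ i ∈ S, ∑ j ∈ Sᶜ, if G.Adj i j then (1:ℝ) else 0 := by
    unfold cutSize
    push_cast
    congr!
  unfold quadForm
  simp only [key, Finset.sum_add_distrib]
  rw [sum_indic]
  have h2 : (∑ i, ∑ j, if j ∈ S then (if i ∈ Sᶜ then (if G.Adj i j then (4:ℝ) else 0) else 0) else 0)
      = ∑ i ∈ S, ∑ j ∈ Sᶜ, if G.Adj i j then (4:ℝ) else 0 := by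
    rw [Finset.sum_comm]
    rw [sum_indic S (fun i j => if G.Adj j i then (4:ℝ) else 0)]
    refine Finset.sum_congr rfl fun i _ => Finset.sum_congr rfl fun j _ => ?_
    rw [G.adj_comm]
  rw [h2, hcast]
  rw [Finset.mul_sum]
  simp only [Finset.mul_sum, mul_ite, mul_one, mul_zero]
  ring

private lemma quad_update (x : Fin n → ℝ) (k : Fin n) (t : ℝ) :
    quadForm G (Function.update x k t) =
      (∑ j ∈ univ.erase k, if G.Adj k j then (t - x j) ^ 2 else 0) +
      (∑ i ∈ univ.erase k, ∑ j ∈ univ.erase k, if G.Adj i j then (x i - x j) ^ 2 else 0) / 2 := by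
  unfold quadForm
  rw [← Finset.add_sum_erase _ _ (Finset.mem_univ k)]
  have hout : (∑ j, if G.Adj k j then (Function.update x k t k - Function.update x k t j) ^ 2 else 0)
      = ∑ j ∈ univ.erase k, if G.Adj k j then (t - x j) ^ 2 else 0 := by
    rw [← Finset.add_sum_erase _ _ (Finset.mem_univ k)]
    simp only [G.irrefl, if_false, zero_add]
    refine Finset.sum_congr rfl fun j hj => ?_
    have hjk : j ≠ k := Finset.ne_of_mem_erase hj
    rw [Function.update_self, Function.update_of_ne hjk]
  have hin : ∀ i ∈ univ.erase k,
      (∑ j, if G.Adj i j then (Function.update x k t i - Function.update x k t j) ^ 2 else 0)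
      = (if G.Adj k i then (t - x i) ^ 2 else 0)
        + ∑ j ∈ univ.erase k, if G.Adj i j then (x i - x j) ^ 2 else 0 := by
    intro i hi
    have hik : i ≠ k := Finset.ne_of_mem_erase hi
    rw [← Finset.add_sum_erase _ _ (Finset.mem_univ k)]
    congr 1
    · rw [Function.update_self, Function.update_of_ne hik, G.adj_comm]
      congr 1
      ring
    · refine Finset.sum_congr rfl fun j hj => ?_
      have hjk : j ≠ k := Finset.ne_of_mem_erase hj
      rw [Function.update_of_ne hjk, Function.update_of_ne hik]
  rw [hout, Finset.sum_congr rfl hin, Finset.sum_add_distrib]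
  have : (∑ i ∈ univ.erase k, if G.Adj k i then (t - x i) ^ 2 else 0)
      = ∑ j ∈ univ.erase k, if G.Adj k j then (t - x j) ^ 2 else 0 := rfl
  rw [this]
  ring

private lemma quad_le_max (x : Fin n → ℝ) (k : Fin n) (ht : |x k| ≤ 1) :
    quadForm G x ≤ max (quadForm G (Function.update x k 1))
      (quadForm G (Function.update x k (-1))) := by
  obtain ⟨ht1, ht2⟩ := abs_le.mp ht
  set B := (∑ i ∈ univ.erase k, ∑ j ∈ univ.erase k, if G.Adj i j then (x i - x j) ^ 2 else 0) / 2 with hB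
  have hA : ∀ t : ℝ, (∑ j ∈ univ.erase k, if G.Adj k j then (t - x j) ^ 2 else 0)
      = t ^ 2 * (∑ j ∈ univ.erase k, if G.Adj k j then (1:ℝ) else 0)
        - 2 * t * (∑ j ∈ univ.erase k, if G.Adj k j then x j else 0)
        + (∑ j ∈ univ.erase k, if G.Adj k j then (x j) ^ 2 else 0) := by
    intro t
    rw [Finset.mul_sum, Finset.mul_sum, ← Finset.sum_sub_distrib, ← Finset.sum_add_distrib]
    refine Finset.sum_congr rfl fun j _ => ?_
    split_ifs <;> ring
  set d := (∑ j ∈ univ.erase k, if G.Adj k j then (1:ℝ) else 0) with hd'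
  set m := (∑ j ∈ univ.erase k, if G.Adj k j then x j else 0) with hm'
  set s := (∑ j ∈ univ.erase k, if G.Adj k j then (x j) ^ 2 else 0) with hs'
  have hd : 0 ≤ d := Finset.sum_nonneg fun j _ => by split_ifs <;> norm_num
  have hx : quadForm G x = (x k) ^ 2 * d - 2 * (x k) * m + s + B := by
    have := quad_update G x k (x k)
    rw [Function.update_eq_self] at this
    rw [this, hA]
  have h1 : quadForm G (Function.update x k 1) = 1 * d - 2 * m + s + B := by
    rw [quad_update, hA]; ring
  have h2 : quadForm G (Function.update x k (-1)) = 1 * d + 2 * m + s + B := by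
    rw [quad_update, hA]; ring
  have hsq : (x k) ^ 2 ≤ 1 := by nlinarith
  rcases le_total 0 m with hm | hm
  · refine le_max_of_le_right ?_
    rw [hx, h2]; nlinarith
  · refine le_max_of_le_left ?_
    rw [hx, h1]; nlinarith

private lemma quad_le_maxcut (M : ℝ) (hM : ∀ S : Finset (Fin n), (cutSize G S : ℝ) ≤ M) :
    ∀ (m : ℕ) (x : Fin n → ℝ),
      (univ.filter fun i => x i ≠ 1 ∧ x i ≠ -1).card ≤ m →
      (∀ i, |x i| ≤ 1) → quadForm G x ≤ 4 * M := by
  intro m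
  induction m with
  | zero =>
    intro x hcard hx
    have hemp : (univ.filter fun i => x i ≠ 1 ∧ x i ≠ -1) = ∅ :=
      Finset.card_eq_zero.mp (Nat.le_zero.mp hcard)
    have hall : ∀ i, x i = 1 ∨ x i = -1 := by
      intro i
      by_contra hc
      push_neg at hc
      have : i ∈ (univ.filter fun i => x i ≠ 1 ∧ x i ≠ -1) := by
        simp [Finset.mem_filter, hc.1, hc.2]
      rw [hemp] at this
      exact absurd this (Finset.notMem_empty i)
    set S := univ.filter (fun i => x i = 1) with hS
    have hxS : x = fun i => if i ∈ S then (1:ℝ) else -1 := by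
      funext i
      by_cases hi : x i = 1
      · simp [hS, hi]
      · rcases hall i with h | h
        · exact absurd h hi
        · have hiS : i ∉ S := by simp [hS, hi]
          simp [hiS, h]
    rw [hxS, quad_pm]
    have := hM S
    linarith
  | succ m ih =>
    intro x hcard hx
    by_cases hle : (univ.filter fun i => x i ≠ 1 ∧ x i ≠ -1).card ≤ m
    · exact ih x hle hx
    · have hpos : 0 < (univ.filter fun i => x i ≠ 1 ∧ x i ≠ -1).card := by omega
      obtain ⟨k, hk⟩ := Finset.card_pos.mp hpos
      rw [Finset.mem_filter] at hk
      have hsub : ∀ t : ℝ, t = 1 ∨ t = -1 →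
          (univ.filter fun i => Function.update x k t i ≠ 1 ∧ Function.update x k t i ≠ -1).card ≤ m := by
        intro t htv
        have hss : (univ.filter fun i => Function.update x k t i ≠ 1 ∧ Function.update x k t i ≠ -1)
            ⊆ (univ.filter fun i => x i ≠ 1 ∧ x i ≠ -1).erase k := by
          intro i hi
          rw [Finset.mem_filter] at hi
          rcases eq_or_ne i k with rfl | hik
          · rw [Function.update_self] at hi
            rcases htv with rfl | rfl
            · exact absurd rfl hi.2.1
            · exact absurd rfl hi.2.2
          · rw [Function.update_of_ne hik] at hi
            rw [Finset.mem_erase, Finset.mem_filter]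
            exact ⟨hik, Finset.mem_univ i, hi.2⟩
        have := Finset.card_le_card hss
        rw [Finset.card_erase_of_mem (Finset.mem_filter.mpr hk)] at this
        omega
      have hupd : ∀ t : ℝ, |t| ≤ 1 → ∀ i, |Function.update x k t i| ≤ 1 := by
        intro t htle i
        rcases eq_or_ne i k with rfl | hik
        · rwa [Function.update_self]
        · rw [Function.update_of_ne hik]; exact hx i
      have h1 := ih (Function.update x k 1) (hsub 1 (Or.inl rfl)) (hupd 1 (by norm_num))
      have h2 := ih (Function.update x k (-1)) (hsub (-1) (Or.inr rfl)) (hupd (-1) (by norm_num))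
      calc quadForm G x ≤ max (quadForm G (Function.update x k 1))
            (quadForm G (Function.update x k (-1))) := quad_le_max G x k (hx k)
        _ ≤ 4 * M := max_le h1 h2

end Aux

theorem mu_inf_eq_four_maxcut {n : ℕ} (G : SimpleGraph (Fin n)) (hE : ∃ a b, G.Adj a b) :
    IsGreatest {y | ∃ x : Fin n → ℝ, supNorm x = 1 ∧ quadForm G x = y}
      (4 * ((Finset.univ.sup fun S : Finset (Fin n) => cutSize G S : ℕ) : ℝ)) := by
  obtain ⟨a, b, hab⟩ := hE
  have hne : Nonempty (Fin n) := ⟨a⟩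
  constructor
  · -- membership
    obtain ⟨S, -, hS⟩ := Finset.exists_mem_eq_sup (univ : Finset (Finset (Fin n)))
      Finset.univ_nonempty (fun S => cutSize G S)
    refine ⟨fun i => if i ∈ S then (1:ℝ) else -1, ?_, ?_⟩
    · have h1 : (fun i : Fin n => |if i ∈ S then (1:ℝ) else -1|) = fun _ => (1:ℝ) := by
        funext i; split_ifs <;> norm_num
      unfold supNorm
      rw [h1, ciSup_const]
    · rw [quad_pm, hS]
  · -- upper bound
    rintro y ⟨x, hxn, rfl⟩
    have hbd : ∀ i, |x i| ≤ 1 := by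
      intro i
      have hb : BddAbove (Set.range fun i => |x i|) :=
        Set.Finite.bddAbove (Set.finite_range _)
      have := le_ciSup hb i
      rw [← supNorm, hxn] at this
      exact this
    refine quad_le_maxcut G _ ?_ n x ?_ hbd
    · intro S
      exact Nat.cast_le.mpr (Finset.le_sup (Finset.mem_univ S))
    · calc (univ.filter fun i => x i ≠ 1 ∧ x i ≠ -1).card ≤ (univ : Finset (Fin n)).card :=
          Finset.card_filter_le _ _
        _ = n := by simp
end

section
/- For a finite simple graph G with at least one edge, the function f_G : [1, ∞) → R defined by f_G(p) = μ^{(p)}(G) is continuous. -/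
open scoped Classical
open Finset

section helpers
variable {n : ℕ} (G : SimpleGraph (Fin n))

lemma quadForm_nonneg (x : Fin n → ℝ) : 0 ≤ quadForm G x := by
  unfold quadForm
  apply div_nonneg _ (by norm_num)
  apply Finset.sum_nonneg; intro i _
  apply Finset.sum_nonneg; intro j _
  split <;> positivity

lemma sum_eq_one_of_pNorm {p : ℝ} (hp : 0 < p) {x : Fin n → ℝ}
    (hx : pNorm p x = 1) : ∑ i, |x i| ^ p = 1 := by
  have hS : (0:ℝ) ≤ ∑ i, |x i| ^ p :=
    Finset.sum_nonneg fun i _ => Real.rpow_nonneg (abs_nonneg _) _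
  unfold pNorm at hx
  calc ∑ i, |x i| ^ p = ((∑ i, |x i| ^ p) ^ (1/p)) ^ p := by
        rw [← Real.rpow_mul hS, one_div_mul_cancel hp.ne', Real.rpow_one]
    _ = (1:ℝ) ^ p := by rw [hx]
    _ = 1 := Real.one_rpow p

lemma abs_le_one_of_pNorm {p : ℝ} (hp : 0 < p) {x : Fin n → ℝ}
    (hx : pNorm p x = 1) (i : Fin n) : |x i| ≤ 1 := by
  have hs := sum_eq_one_of_pNorm hp hx
  have hle : |x i| ^ p ≤ 1 := by
    rw [← hs]
    exact Finset.single_le_sum (f := fun j => |x j| ^ p)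
      (fun j _ => Real.rpow_nonneg (abs_nonneg _) _) (mem_univ i)
  by_contra h
  push_neg at h
  have h1 : 1 < |x i| ^ p :=
    (Real.one_lt_rpow_iff_of_pos (lt_trans one_pos h)).mpr (Or.inl ⟨h, hp⟩)
  linarith

lemma bddAbove_S {p : ℝ} (hp : 1 ≤ p) :
    BddAbove {y | ∃ x : Fin n → ℝ, pNorm p x = 1 ∧ quadForm G x = y} := by
  refine ⟨2 * (n:ℝ)^2, ?_⟩
  rintro y ⟨x, hx, rfl⟩
  have hb : ∀ i, |x i| ≤ 1 := abs_le_one_of_pNorm (lt_of_lt_of_le one_pos hp) hx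
  unfold quadForm
  rw [div_le_iff₀ (by norm_num : (0:ℝ) < 2)]
  calc (∑ i, ∑ j, if G.Adj i j then (x i - x j)^2 else 0)
      ≤ ∑ _i : Fin n, ∑ _j : Fin n, (4:ℝ) := by
        apply Finset.sum_le_sum; intro i _
        apply Finset.sum_le_sum; intro j _
        split
        · have h1 := abs_le.mp (hb i); have h2 := abs_le.mp (hb j)
          nlinarith [h1.1, h1.2, h2.1, h2.2]
        · norm_num
    _ = (n:ℝ) * ((n:ℝ) * 4) := by simp [Finset.sum_const, mul_assoc]
    _ ≤ 2 * (n:ℝ)^2 * 2 := by nlinarith [Nat.cast_nonneg (α := ℝ) n]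

lemma nonempty_S {p : ℝ} (hp : 0 < p) (hn : 0 < n) :
    Set.Nonempty {y | ∃ x : Fin n → ℝ, pNorm p x = 1 ∧ quadForm G x = y} := by
  have a : Fin n := ⟨0, hn⟩
  set x0 : Fin n → ℝ := fun i => if i = a then 1 else 0 with hx0
  refine ⟨quadForm G x0, x0, ?_, rfl⟩
  unfold pNorm
  have h1 : ∀ i, |x0 i| ^ p = if i = a then 1 else 0 := by
    intro i
    by_cases h : i = a <;>
      simp [hx0, h, Real.zero_rpow hp.ne', Real.one_rpow]
  rw [Finset.sum_congr rfl (fun i _ => h1 i)]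
  simp

lemma quadForm_le_mu {p : ℝ} (hp : 1 ≤ p) {x : Fin n → ℝ} (hx : pNorm p x = 1) :
    quadForm G x ≤ mu G p :=
  le_csSup (bddAbove_S G hp) ⟨x, hx, rfl⟩

lemma mu_nonneg {p : ℝ} (hp : 1 ≤ p) (hn : 0 < n) : 0 ≤ mu G p := by
  obtain ⟨y, x, hx, rfl⟩ := nonempty_S G (lt_of_lt_of_le one_pos hp) hn
  exact le_trans (quadForm_nonneg G x) (quadForm_le_mu G hp hx)

lemma pNorm_smul {p : ℝ} (hp : 0 < p) {c : ℝ} (hc : 0 ≤ c) (x : Fin n → ℝ) :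
    pNorm p (c • x) = c * pNorm p x := by
  unfold pNorm
  have h1 : ∀ i, |(c • x) i| ^ p = c ^ p * |x i| ^ p := by
    intro i
    rw [Pi.smul_apply, smul_eq_mul, abs_mul, abs_of_nonneg hc,
      Real.mul_rpow hc (abs_nonneg _)]
  rw [Finset.sum_congr rfl (fun i _ => h1 i), ← Finset.mul_sum,
    Real.mul_rpow (Real.rpow_nonneg hc _)
      (Finset.sum_nonneg fun i _ => Real.rpow_nonneg (abs_nonneg _) _),
    ← Real.rpow_mul hc, mul_one_div_cancel hp.ne', Real.rpow_one]

lemma quadForm_smul (c : ℝ) (x : Fin n → ℝ) :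
    quadForm G (c • x) = c ^ 2 * quadForm G x := by
  unfold quadForm
  have h1 : (∑ i, ∑ j, if G.Adj i j then ((c • x) i - (c • x) j) ^ 2 else 0)
      = c ^ 2 * ∑ i, ∑ j, if G.Adj i j then (x i - x j) ^ 2 else 0 := by
    rw [Finset.mul_sum]
    refine Finset.sum_congr rfl fun i _ => ?_
    rw [Finset.mul_sum]
    refine Finset.sum_congr rfl fun j _ => ?_
    split <;> simp [Pi.smul_apply, smul_eq_mul] <;> ring
  rw [h1, mul_div_assoc]

lemma pNorm_pos {q : ℝ} (hq : 0 < q) {x : Fin n → ℝ} {i : Fin n} (hi : x i ≠ 0) :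
    0 < pNorm q x := by
  unfold pNorm
  apply Real.rpow_pos_of_pos
  calc (0:ℝ) < |x i| ^ q := Real.rpow_pos_of_pos (abs_pos.mpr hi) q
    _ ≤ ∑ j, |x j| ^ q := Finset.single_le_sum (f := fun j => |x j| ^ q)
        (fun j _ => Real.rpow_nonneg (abs_nonneg _) _) (mem_univ i)

lemma exists_ne_zero_of_pNorm {p : ℝ} (hp : 0 < p) {x : Fin n → ℝ}
    (hx : pNorm p x = 1) : ∃ i, x i ≠ 0 := by
  by_contra h
  push_neg at h
  have : pNorm p x = 0 := by
    unfold pNorm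
    rw [Finset.sum_congr rfl (fun i _ => by
      rw [h i, abs_zero, Real.zero_rpow hp.ne'])]
    rw [Finset.sum_const_zero]
    exact Real.zero_rpow (by positivity)
  rw [this] at hx
  norm_num at hx

end helpers

section main
variable {n : ℕ} (G : SimpleGraph (Fin n))

lemma pNorm_q_le_one {p q : ℝ} (hp : 1 ≤ p) (hpq : p ≤ q) {x : Fin n → ℝ}
    (hx : pNorm p x = 1) : pNorm q x ≤ 1 := by
  have hp0 : 0 < p := lt_of_lt_of_le one_pos hp
  have hq0 : 0 < q := lt_of_lt_of_le hp0 hpq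
  have hb := abs_le_one_of_pNorm hp0 hx
  have hsum : ∑ i, |x i| ^ q ≤ 1 := by
    rw [← sum_eq_one_of_pNorm hp0 hx]
    apply Finset.sum_le_sum
    intro i _
    rcases eq_or_lt_of_le (abs_nonneg (x i)) with h | h
    · rw [← h, Real.zero_rpow hq0.ne', Real.zero_rpow hp0.ne']
    · exact Real.rpow_le_rpow_of_exponent_ge h (hb i) hpq
  exact Real.rpow_le_one
    (Finset.sum_nonneg fun i _ => Real.rpow_nonneg (abs_nonneg _) _) hsum (by positivity)

lemma mu_mono {p q : ℝ} (hp : 1 ≤ p) (hpq : p ≤ q) (hn : 0 < n) :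
    mu G p ≤ mu G q := by
  have hp0 : 0 < p := lt_of_lt_of_le one_pos hp
  have hq0 : 0 < q := lt_of_lt_of_le hp0 hpq
  have hq1 : 1 ≤ q := le_trans hp hpq
  apply csSup_le (nonempty_S G hp0 hn)
  rintro y ⟨x, hx, rfl⟩
  obtain ⟨i, hi⟩ := exists_ne_zero_of_pNorm hp0 hx
  set c := pNorm q x with hc
  have hc0 : 0 < c := pNorm_pos hq0 hi
  have hc1 : c ≤ 1 := pNorm_q_le_one hp hpq hx
  have hy : pNorm q (c⁻¹ • x) = 1 := by
    rw [pNorm_smul hq0 (le_of_lt (inv_pos.mpr hc0)), ← hc, inv_mul_cancel₀ hc0.ne']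
  have hqf : quadForm G x = c ^ 2 * quadForm G (c⁻¹ • x) := by
    rw [quadForm_smul]
    field_simp
  rw [hqf]
  calc c ^ 2 * quadForm G (c⁻¹ • x) ≤ 1 * quadForm G (c⁻¹ • x) := by
        apply mul_le_mul_of_nonneg_right _ (quadForm_nonneg G _)
        nlinarith
    _ = quadForm G (c⁻¹ • x) := one_mul _
    _ ≤ mu G q := quadForm_le_mu G hq1 hy

lemma pNorm_le_card_rpow {p q : ℝ} (hp : 1 ≤ p) (hpq : p ≤ q) (hn : 0 < n)
    {x : Fin n → ℝ} (hx : pNorm q x = 1) :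
    pNorm p x ≤ (n : ℝ) ^ (1/p - 1/q) := by
  have hp0 : 0 < p := lt_of_lt_of_le one_pos hp
  have hq0 : 0 < q := lt_of_lt_of_le hp0 hpq
  have hnR : (0:ℝ) < n := by exact_mod_cast hn
  have hsumq : ∑ i, |x i| ^ q = 1 := sum_eq_one_of_pNorm hq0 hx
  have key : ∑ i, (n:ℝ)⁻¹ * |x i| ^ p ≤
      (∑ i, (n:ℝ)⁻¹ * (|x i| ^ p) ^ (q/p)) ^ (1 / (q/p)) := by
    apply Real.arith_mean_le_rpow_mean Finset.univ (fun _ => (n:ℝ)⁻¹)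
      (fun i => |x i| ^ p)
      (fun i _ => by positivity)
      (by simp [Finset.sum_const]; field_simp)
      (fun i _ => Real.rpow_nonneg (abs_nonneg _) _)
      ((one_le_div hp0).mpr hpq)
  have hzq : ∀ i, (|x i| ^ p) ^ (q/p) = |x i| ^ q := by
    intro i
    rw [← Real.rpow_mul (abs_nonneg _), mul_div_cancel₀ _ hp0.ne']
  have hrs : (∑ i, (n:ℝ)⁻¹ * (|x i| ^ p) ^ (q/p)) = (n:ℝ)⁻¹ := by
    rw [← Finset.mul_sum, Finset.sum_congr rfl (fun i _ => hzq i), hsumq, mul_one]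
  rw [hrs, ← Finset.mul_sum] at key
  have h1 : (1 : ℝ) / (q/p) = p / q := by field_simp
  rw [h1] at key
  have hsum_le : ∑ i, |x i| ^ p ≤ (n:ℝ) ^ (1 - p/q) := by
    have h2 : ∑ i, |x i| ^ p ≤ (n:ℝ) * ((n:ℝ)⁻¹) ^ (p/q) := by
      calc ∑ i, |x i| ^ p = (n:ℝ) * ((n:ℝ)⁻¹ * ∑ i, |x i| ^ p) := by
            field_simp
        _ ≤ (n:ℝ) * ((n:ℝ)⁻¹) ^ (p/q) := mul_le_mul_of_nonneg_left key hnR.le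
    refine h2.trans_eq ?_
    rw [Real.inv_rpow hnR.le, ← Real.rpow_neg hnR.le, sub_eq_add_neg,
      Real.rpow_add hnR, Real.rpow_one]
  calc pNorm p x = (∑ i, |x i| ^ p) ^ (1/p) := rfl
    _ ≤ ((n:ℝ) ^ (1 - p/q)) ^ (1/p) := by
        apply Real.rpow_le_rpow
          (Finset.sum_nonneg fun i _ => Real.rpow_nonneg (abs_nonneg _) _)
          hsum_le (by positivity)
    _ = (n:ℝ) ^ (1/p - 1/q) := by
        rw [← Real.rpow_mul hnR.le]
        congr 1
        field_simp [hp0.ne', hq0.ne']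
        try exact Or.inl trivial

lemma mu_le_mul {p q : ℝ} (hp : 1 ≤ p) (hpq : p ≤ q) (hn : 0 < n) :
    mu G q ≤ (n:ℝ) ^ (2 * (1/p - 1/q)) * mu G p := by
  have hp0 : 0 < p := lt_of_lt_of_le one_pos hp
  have hq0 : 0 < q := lt_of_lt_of_le hp0 hpq
  have hq1 : 1 ≤ q := le_trans hp hpq
  have hnR : (0:ℝ) < n := by exact_mod_cast hn
  apply csSup_le (nonempty_S G hq0 hn)
  rintro y ⟨x, hx, rfl⟩
  obtain ⟨i, hi⟩ := exists_ne_zero_of_pNorm hq0 hx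
  set c := pNorm p x with hc
  have hc0 : 0 < c := pNorm_pos hp0 hi
  have hcle : c ≤ (n:ℝ) ^ (1/p - 1/q) := pNorm_le_card_rpow hp hpq hn hx
  have hy : pNorm p (c⁻¹ • x) = 1 := by
    rw [pNorm_smul hp0 (le_of_lt (inv_pos.mpr hc0)), ← hc, inv_mul_cancel₀ hc0.ne']
  have hqf : quadForm G x = c ^ 2 * quadForm G (c⁻¹ • x) := by
    rw [quadForm_smul]
    field_simp
  rw [hqf]
  have h2 : c ^ 2 ≤ ((n:ℝ) ^ (1/p - 1/q)) ^ 2 :=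
    pow_le_pow_left₀ hc0.le hcle 2
  have h3 : ((n:ℝ) ^ (1/p - 1/q)) ^ 2 = (n:ℝ) ^ (2 * (1/p - 1/q)) := by
    rw [← Real.rpow_natCast ((n:ℝ) ^ (1/p - 1/q)) 2, ← Real.rpow_mul hnR.le]
    norm_num
    ring_nf
  calc c ^ 2 * quadForm G (c⁻¹ • x) ≤ c ^ 2 * mu G p := by
        apply mul_le_mul_of_nonneg_left (quadForm_le_mu G hp hy) (by positivity)
    _ ≤ (n:ℝ) ^ (2 * (1/p - 1/q)) * mu G p := by
        apply mul_le_mul_of_nonneg_right _ (mu_nonneg G hp hn)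
        rw [← h3]; exact h2

end main

section final
variable {n : ℕ} (G : SimpleGraph (Fin n))

lemma mu_upper_bound (hn : 0 < n) {p p₀ : ℝ} (hp : 1 ≤ p) (hp₀ : 1 ≤ p₀) :
    mu G p ≤ (n:ℝ) ^ (2 * |1/p - 1/p₀|) * mu G p₀ := by
  have hnR : (1:ℝ) ≤ n := by exact_mod_cast hn
  have hnpos : (0:ℝ) < n := by exact_mod_cast hn
  have hp0 : 0 < p := lt_of_lt_of_le one_pos hp
  have hp₀0 : 0 < p₀ := lt_of_lt_of_le one_pos hp₀
  rcases le_total p p₀ with h | h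
  · have hfac : (1:ℝ) ≤ (n:ℝ) ^ (2 * |1/p - 1/p₀|) :=
      Real.one_le_rpow hnR (by positivity)
    calc mu G p ≤ mu G p₀ := mu_mono G hp h hn
      _ ≤ (n:ℝ) ^ (2 * |1/p - 1/p₀|) * mu G p₀ :=
        le_mul_of_one_le_left (mu_nonneg G hp₀ hn) hfac
  · have habs : |1/p - 1/p₀| = 1/p₀ - 1/p := by
      rw [abs_sub_comm]
      exact abs_of_nonneg (by
        have := one_div_le_one_div_of_le hp₀0 h
        linarith)
    calc mu G p ≤ (n:ℝ) ^ (2 * (1/p₀ - 1/p)) * mu G p₀ := mu_le_mul G hp₀ h hn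
      _ = (n:ℝ) ^ (2 * |1/p - 1/p₀|) * mu G p₀ := by rw [habs]

lemma mu_lower_bound (hn : 0 < n) {p p₀ : ℝ} (hp : 1 ≤ p) (hp₀ : 1 ≤ p₀) :
    (n:ℝ) ^ (-(2 * |1/p - 1/p₀|)) * mu G p₀ ≤ mu G p := by
  have hnR : (1:ℝ) ≤ n := by exact_mod_cast hn
  have hnpos : (0:ℝ) < n := by exact_mod_cast hn
  have hp0 : 0 < p := lt_of_lt_of_le one_pos hp
  have hp₀0 : 0 < p₀ := lt_of_lt_of_le one_pos hp₀
  rcases le_total p p₀ with h | h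
  · have habs : |1/p - 1/p₀| = 1/p - 1/p₀ := by
      exact abs_of_nonneg (by
        have := one_div_le_one_div_of_le hp0 h
        linarith)
    have hI : mu G p₀ ≤ (n:ℝ) ^ (2 * (1/p - 1/p₀)) * mu G p := mu_le_mul G hp h hn
    calc (n:ℝ) ^ (-(2 * |1/p - 1/p₀|)) * mu G p₀
        ≤ (n:ℝ) ^ (-(2 * |1/p - 1/p₀|)) * ((n:ℝ) ^ (2 * (1/p - 1/p₀)) * mu G p) :=
          mul_le_mul_of_nonneg_left hI (Real.rpow_nonneg hnpos.le _)
      _ = mu G p := by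
          rw [← mul_assoc, habs, ← Real.rpow_add hnpos, neg_add_cancel,
            Real.rpow_zero, one_mul]
  · have hfac : (n:ℝ) ^ (-(2 * |1/p - 1/p₀|)) ≤ 1 :=
      Real.rpow_le_one_of_one_le_of_nonpos hnR (neg_nonpos.mpr (by positivity))
    calc (n:ℝ) ^ (-(2 * |1/p - 1/p₀|)) * mu G p₀
        ≤ 1 * mu G p₀ := mul_le_mul_of_nonneg_right hfac (mu_nonneg G hp₀ hn)
      _ = mu G p₀ := one_mul _
      _ ≤ mu G p := mu_mono G hp₀ h hn

end final

theorem mu_continuousOn {n : ℕ} (G : SimpleGraph (Fin n)) (hE : ∃ a b, G.Adj a b) :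
    ContinuousOn (fun p => mu G p) (Set.Ici (1 : ℝ)) := by
  obtain ⟨a, b, hab⟩ := hE
  have hn : 0 < n := a.pos
  have hnpos : (0:ℝ) < n := by exact_mod_cast hn
  intro p₀ hp₀
  rw [Set.mem_Ici] at hp₀
  have hp₀0 : 0 < p₀ := lt_of_lt_of_le one_pos hp₀
  have hinner : ContinuousAt (fun p : ℝ => 2 * |1/p - 1/p₀|) p₀ := by
    apply continuousAt_const.mul
    apply ContinuousAt.abs
    exact ((continuousAt_const.div continuousAt_id hp₀0.ne').sub continuousAt_const)
  have hU : Filter.Tendsto (fun p : ℝ => (n:ℝ) ^ (2 * |1/p - 1/p₀|) * mu G p₀)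
      (nhdsWithin p₀ (Set.Ici 1)) (nhds (mu G p₀)) := by
    have hc : ContinuousAt (fun p : ℝ => (n:ℝ) ^ (2 * |1/p - 1/p₀|) * mu G p₀) p₀ :=
      (ContinuousAt.rpow continuousAt_const hinner (Or.inl hnpos.ne')).mul continuousAt_const
    have := hc.tendsto.mono_left (nhdsWithin_le_nhds : nhdsWithin p₀ (Set.Ici 1) ≤ nhds p₀)
    simpa using this
  have hL : Filter.Tendsto (fun p : ℝ => (n:ℝ) ^ (-(2 * |1/p - 1/p₀|)) * mu G p₀)
      (nhdsWithin p₀ (Set.Ici 1)) (nhds (mu G p₀)) := by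
    have hc : ContinuousAt (fun p : ℝ => (n:ℝ) ^ (-(2 * |1/p - 1/p₀|)) * mu G p₀) p₀ :=
      (ContinuousAt.rpow continuousAt_const hinner.neg (Or.inl hnpos.ne')).mul continuousAt_const
    have := hc.tendsto.mono_left (nhdsWithin_le_nhds : nhdsWithin p₀ (Set.Ici 1) ≤ nhds p₀)
    simpa using this
  refine tendsto_of_tendsto_of_tendsto_of_le_of_le' hL hU ?_ ?_
  · filter_upwards [self_mem_nhdsWithin] with p hp
    exact mu_lower_bound G hn hp hp₀
  · filter_upwards [self_mem_nhdsWithin] with p hp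
    exact mu_upper_bound G hn hp hp₀
end
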